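/- Key identity (*) in the proof of Theorem 1: Let Φ be a field, V and W vector spaces over Φ, and let A ⊆ L(V) ⊆ L(V ⊕ W) and B ⊆ M = U(L(V))·W ⊆ L(V ⊕ W) be subspaces. Set M₁ = [M, ⟨A⟩_{L(V)}] + U(L(V))·B. Then, identifying the ideal of L(V ⊕ W) generated by W with the free Lie algebra L(M) via Lazard's elimination theorem, the ideal of L(V ⊕ W) generated by A ∪ B satisfies ⟨A, B⟩_{L(V ⊕ W)} = ⟨A⟩_{L(V)} + ⟨M₁⟩_{L(M)} (a sum of subspaces of L(V ⊕ W) = L(V) ⊕ L(M)). -/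

import Mathlib

variable (Φ : Type*) [Field Φ]

/-- The Lie ideal of linearity relations inside the free Lie algebra on the type
underlying a module, used to define the free Lie algebra on a module. -/
noncomputable def freeLieModuleRel (M : Type*) [AddCommGroup M] [Module Φ M] :
    LieIdeal Φ (FreeLieAlgebra Φ M) :=
  LieSubmodule.lieSpan Φ _
    ({x | ∃ a b : M, x = FreeLieAlgebra.of Φ (a + b) - FreeLieAlgebra.of Φ a -
        FreeLieAlgebra.of Φ b} ∪
     {x | ∃ (c : Φ) (a : M), x = FreeLieAlgebra.of Φ (c • a) - c • FreeLieAlgebra.of Φ a})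

/-- The free Lie algebra on a module `M`: the quotient of the free Lie algebra on the
type `M` by the linearity relations. -/
abbrev FreeLieModule (M : Type*) [AddCommGroup M] [Module Φ M] :=
  FreeLieAlgebra Φ M ⧸ freeLieModuleRel Φ M

/-- The canonical linear embedding of a module into the free Lie algebra on it. -/
noncomputable def FreeLieModule.ι (M : Type*) [AddCommGroup M] [Module Φ M] :
    M →ₗ[Φ] FreeLieModule Φ M where
  toFun a := (freeLieModuleRel Φ M).toSubmodule.mkQ (FreeLieAlgebra.of Φ a)
  map_add' a b := by
    show (freeLieModuleRel Φ M).toSubmodule.mkQ (FreeLieAlgebra.of Φ (a + b)) =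
      (freeLieModuleRel Φ M).toSubmodule.mkQ (FreeLieAlgebra.of Φ a) +
        (freeLieModuleRel Φ M).toSubmodule.mkQ (FreeLieAlgebra.of Φ b)
    rw [← sub_eq_zero, ← map_add, ← map_sub, Submodule.mkQ_apply,
      Submodule.Quotient.mk_eq_zero]
    exact LieSubmodule.subset_lieSpan (Or.inl ⟨a, b, (sub_sub _ _ _).symm⟩)
  map_smul' c a := by
    show (freeLieModuleRel Φ M).toSubmodule.mkQ (FreeLieAlgebra.of Φ (c • a)) =
      c • (freeLieModuleRel Φ M).toSubmodule.mkQ (FreeLieAlgebra.of Φ a)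
    rw [← sub_eq_zero, ← map_smul, ← map_sub, Submodule.mkQ_apply,
      Submodule.Quotient.mk_eq_zero]
    exact LieSubmodule.subset_lieSpan (Or.inr ⟨c, a, rfl⟩)

/-- The smallest subspace of a Lie algebra containing `s` and stable under the adjoint
action of every element of `K`; when `K` is (the underlying set of) a Lie subalgebra `𝔨`
this is the `U(𝔨)`-submodule generated by `s`. -/
def adSpan {L : Type*} [LieRing L] [LieAlgebra Φ L] (K s : Set L) : Submodule Φ L :=
  sInf {P | s ⊆ P ∧ ∀ x ∈ K, ∀ p ∈ P, ⁅x, p⁆ ∈ P}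

/-- The span of brackets `⁅p, q⁆` with `p ∈ P` and `q ∈ Q`. -/
def bracketSpan {L : Type*} [LieRing L] [LieAlgebra Φ L] (P Q : Submodule Φ L) :
    Submodule Φ L :=
  Submodule.span Φ {x | ∃ p ∈ P, ∃ q ∈ Q, x = ⁅p, q⁆}

/-- The quotient map onto the quotient of a Lie algebra by an ideal, as a Lie algebra
homomorphism. -/
def lieQuotientMk {L : Type*} [LieRing L] [LieAlgebra Φ L] (I : LieIdeal Φ L) :
    L →ₗ⁅Φ⁆ L ⧸ I :=
  { I.toSubmodule.mkQ with map_lie' := fun {_ _} => rfl }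

variable (V W : Type*) [AddCommGroup V] [Module Φ V] [AddCommGroup W] [Module Φ W]

/-- The canonical embedding of `V` into the free Lie algebra on `V ⊕ W`. -/
noncomputable def ιV : V →ₗ[Φ] FreeLieModule Φ (V × W) :=
  (FreeLieModule.ι Φ (V × W)).comp (LinearMap.inl Φ V W)

/-- The canonical embedding of `W` into the free Lie algebra on `V ⊕ W`. -/
noncomputable def ιW : W →ₗ[Φ] FreeLieModule Φ (V × W) :=
  (FreeLieModule.ι Φ (V × W)).comp (LinearMap.inr Φ V W)

/-- The Lie subalgebra of `L(V ⊕ W)` generated by `V`; it is a copy of `L(V)`. -/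
noncomputable def lieV : LieSubalgebra Φ (FreeLieModule Φ (V × W)) :=
  LieSubalgebra.lieSpan Φ _ (Set.range (ιV Φ V W))

/-- The subspace `M = U(L(V)) · W` of `L(V ⊕ W)`: the smallest subspace containing `W`
and stable under the adjoint action of the subalgebra `L(V)`. -/
noncomputable def lazardM : Submodule Φ (FreeLieModule Φ (V × W)) :=
  adSpan Φ ↑(lieV Φ V W) (Set.range (ιW Φ V W))

/-- The Lie ideal of `L(V ⊕ W)` generated by `W`. -/
noncomputable def idealW : LieIdeal Φ (FreeLieModule Φ (V × W)) :=
  LieSubmodule.lieSpan Φ _ (Set.range (ιW Φ V W))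

variable (A B : Submodule Φ (FreeLieModule Φ (V × W)))

/-- The ideal `⟨A⟩_{L(V)}` of the subalgebra `L(V) ⊆ L(V ⊕ W)` generated by a subspace
`A ⊆ L(V)`, realised as a subspace of `L(V ⊕ W)`: the smallest subspace containing `A`
and stable under bracketing with elements of `L(V)`. -/
noncomputable def idealA : Submodule Φ (FreeLieModule Φ (V × W)) :=
  adSpan Φ ↑(lieV Φ V W) ↑A

/-- The subspace `M₁ = [M, ⟨A⟩_{L(V)}] + U(L(V)) · B` of `L(V ⊕ W)`. -/
noncomputable def lazardM1 : Submodule Φ (FreeLieModule Φ (V × W)) :=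
  bracketSpan Φ (lazardM Φ V W) (idealA Φ V W A) ⊔ adSpan Φ ↑(lieV Φ V W) ↑B

/-- The quotient space `N = M / M₁`. -/
abbrev lazardN :=
  ↥(lazardM Φ V W) ⧸ (lazardM1 Φ V W A B).comap (lazardM Φ V W).subtype

/-- The Lie ideal `⟨A, B⟩` of `L(V ⊕ W)` generated by `A ∪ B`. -/
noncomputable def idealAB : LieIdeal Φ (FreeLieModule Φ (V × W)) :=
  LieSubmodule.lieSpan Φ _ (↑A ∪ ↑B)

/-!
Write `Q` for `⟨M₁⟩_{L(M)}`. The inclusion `⊇` is immediate, so it suffices that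
`⟨A⟩_{L(V)} + Q` is an ideal of `L(V ⊕ W)`, and it is enough to test brackets with the generators
`V` and `W`. A derivation `ad v`, `v ∈ V`, preserves `L(M)`, `M`, `⟨A⟩_{L(V)}` and hence `M₁` and
`Q`; as `W ⊆ L(M)`, `Q` is an ideal of the whole algebra. The remaining point is
`[W, ⟨A⟩_{L(V)}] ⊆ Q`: the elements carrying `⟨A⟩_{L(V)}` into the ideal `Q` form a subalgebra,
it contains `M` because `[M, ⟨A⟩_{L(V)}] ⊆ M₁`, and `M` generates `L(M)` as a Lie algebra.
-/

section

variable {Φ} {L : Type*} [LieRing L] [LieAlgebra Φ L]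

theorem subset_adSpan (K s : Set L) : s ⊆ adSpan Φ K s :=
  fun _ hx => Submodule.mem_sInf.mpr fun _ hP => hP.1 hx

theorem adSpan_le {K s : Set L} {P : Submodule Φ L} (hs : s ⊆ P)
    (hP : ∀ x ∈ K, ∀ p ∈ P, ⁅x, p⁆ ∈ P) : adSpan Φ K s ≤ P :=
  sInf_le ⟨hs, hP⟩

theorem lie_mem_adSpan {K s : Set L} {x p : L} (hx : x ∈ K) (hp : p ∈ adSpan Φ K s) :
    ⁅x, p⁆ ∈ adSpan Φ K s :=
  Submodule.mem_sInf.mpr fun P hP => hP.2 x hx p (Submodule.mem_sInf.mp hp P hP)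

theorem lie_mem_adSpan_of_lie_mem {K s : Set L} {x : L} (hK : ∀ k ∈ K, ⁅x, k⁆ ∈ K)
    (hs : ∀ p ∈ s, ⁅x, p⁆ ∈ adSpan Φ K s) {y : L} (hy : y ∈ adSpan Φ K s) :
    ⁅x, y⁆ ∈ adSpan Φ K s := by
  set P := adSpan Φ K s
  suffices P ≤ P ⊓ P.comap (LieAlgebra.ad Φ L x) from (Submodule.mem_inf.mp (this hy)).2
  refine adSpan_le (fun p hp => ⟨subset_adSpan K s hp, hs p hp⟩) ?_
  rintro k hk p ⟨hp, hxp⟩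
  refine ⟨lie_mem_adSpan hk hp, ?_⟩
  simp only [SetLike.mem_coe, Submodule.mem_comap, LieAlgebra.ad_apply] at hxp ⊢
  rw [leibniz_lie]
  exact P.add_mem (lie_mem_adSpan (hK k hk) hp) (lie_mem_adSpan hk hxp)

theorem lie_mem_bracketSpan {P Q : Submodule Φ L} {p q : L} (hp : p ∈ P) (hq : q ∈ Q) :
    ⁅p, q⁆ ∈ bracketSpan Φ P Q :=
  Submodule.subset_span ⟨p, hp, q, hq, rfl⟩

theorem lie_mem_bracketSpan_of_lie_mem {P Q : Submodule Φ L} {x : L}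
    (hP : ∀ p ∈ P, ⁅x, p⁆ ∈ P) (hQ : ∀ q ∈ Q, ⁅x, q⁆ ∈ Q) {y : L}
    (hy : y ∈ bracketSpan Φ P Q) : ⁅x, y⁆ ∈ bracketSpan Φ P Q := by
  induction hy using Submodule.span_induction with
  | mem _ h =>
    obtain ⟨p, hp, q, hq, rfl⟩ := h
    rw [leibniz_lie]
    exact add_mem (lie_mem_bracketSpan (hP p hp) hq) (lie_mem_bracketSpan hp (hQ q hq))
  | zero => simp
  | add _ _ _ _ h₁ h₂ => rw [lie_add]; exact add_mem h₁ h₂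
  | smul c _ _ h => rw [lie_smul]; exact Submodule.smul_mem _ c h

theorem LieSubalgebra.lie_mem_lieSpan_of_lie_mem {s : Set L} {x : L}
    (hs : ∀ m ∈ s, ⁅x, m⁆ ∈ lieSpan Φ L s) {y : L} (hy : y ∈ lieSpan Φ L s) :
    ⁅x, y⁆ ∈ lieSpan Φ L s := by
  induction hy using lieSpan_induction with
  | mem m hm => exact hs m hm
  | zero => simp
  | add _ _ _ _ h₁ h₂ => rw [lie_add]; exact add_mem h₁ h₂
  | smul c _ _ h => rw [lie_smul]; exact SMulMemClass.smul_mem c h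
  | lie a b ha hb h₁ h₂ =>
    rw [leibniz_lie]
    exact add_mem (lie_mem _ h₁ hb) (lie_mem _ ha h₂)

theorem LieSubalgebra.lie_mem_of_mem_lieSpan {s : Set L} {P : Submodule Φ L} {I : LieIdeal Φ L}
    (hs : ∀ m ∈ s, ∀ p ∈ P, ⁅m, p⁆ ∈ I) {y p : L} (hy : y ∈ lieSpan Φ L s) (hp : p ∈ P) :
    ⁅y, p⁆ ∈ I := by
  induction hy using lieSpan_induction with
  | mem m hm => exact hs m hm p hp
  | zero => simp
  | add _ _ _ _ h₁ h₂ => rw [add_lie]; exact add_mem h₁ h₂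
  | smul c _ _ h => rw [smul_lie]; exact I.smul_mem c h
  | lie a b _ _ h₁ h₂ =>
    rw [lie_lie]
    exact sub_mem (I.lie_mem h₂) (I.lie_mem h₁)

theorem LieSubalgebra.lie_mem_of_lieSpan_eq_top {s : Set L} (hs : lieSpan Φ L s = ⊤)
    {Q : Submodule Φ L} (hQ : ∀ m ∈ s, ∀ q ∈ Q, ⁅m, q⁆ ∈ Q) (y : L) :
    ∀ q ∈ Q, ⁅y, q⁆ ∈ Q := by
  have hy : y ∈ lieSpan Φ L s := hs ▸ LieSubalgebra.mem_top y
  induction hy using lieSpan_induction with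
  | mem m hm => exact hQ m hm
  | zero => simp
  | add _ _ _ _ h₁ h₂ => intro q hq; rw [add_lie]; exact add_mem (h₁ q hq) (h₂ q hq)
  | smul c _ _ h => intro q hq; rw [smul_lie]; exact Q.smul_mem c (h q hq)
  | lie a b _ _ h₁ h₂ => intro q hq; rw [lie_lie]; exact sub_mem (h₁ _ (h₂ q hq)) (h₂ _ (h₁ q hq))

end

theorem FreeLieAlgebra.lieSpan_range_of (X : Type*) :
    LieSubalgebra.lieSpan Φ (FreeLieAlgebra Φ X) (Set.range (of Φ)) = ⊤ := by
  set S := LieSubalgebra.lieSpan Φ (FreeLieAlgebra Φ X) (Set.range (of Φ))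
  let F : FreeLieAlgebra Φ X →ₗ⁅Φ⁆ S :=
    lift Φ fun x => ⟨of Φ x, LieSubalgebra.subset_lieSpan ⟨x, rfl⟩⟩
  have hF : S.incl.comp F = LieHom.id := hom_ext fun x => by simp [F]
  refine eq_top_iff.mpr fun y _ => ?_
  rw [show y = S.incl (F y) from (DFunLike.congr_fun hF y).symm]
  exact (F y).2

theorem FreeLieModule.lieSpan_range_ι (M : Type*) [AddCommGroup M] [Module Φ M] :
    LieSubalgebra.lieSpan Φ (FreeLieModule Φ M) (Set.range (ι Φ M)) = ⊤ := by
  set q := lieQuotientMk Φ (freeLieModuleRel Φ M)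
  have h := LieSubalgebra.map_lieSpan (f := q) (s := Set.range (FreeLieAlgebra.of Φ))
  rw [FreeLieAlgebra.lieSpan_range_of, ← Set.range_comp] at h
  refine eq_top_iff.mpr fun y _ => ?_
  obtain ⟨z, rfl⟩ := (freeLieModuleRel Φ M).toSubmodule.mkQ_surjective y
  exact h ▸ (LieSubalgebra.mem_map q ⊤ _).mpr ⟨z, LieSubalgebra.mem_top z, rfl⟩

section Lazard

variable {Φ V W A B}

theorem ιV_mem_lieV (v : V) : ιV Φ V W v ∈ lieV Φ V W :=
  LieSubalgebra.subset_lieSpan ⟨v, rfl⟩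

theorem ιW_mem_lazardM (w : W) : ιW Φ V W w ∈ lazardM Φ V W :=
  subset_adSpan _ _ ⟨w, rfl⟩

theorem lazardM_le_idealW : lazardM Φ V W ≤ (idealW Φ V W).toSubmodule :=
  adSpan_le (fun _ hx => LieSubmodule.subset_lieSpan hx) fun _ _ _ hp => (idealW Φ V W).lie_mem hp

theorem lieSpan_range_ιV_union_range_ιW :
    LieSubalgebra.lieSpan Φ _ (Set.range (ιV Φ V W) ∪ Set.range (ιW Φ V W)) = ⊤ := by
  rw [eq_top_iff, ← FreeLieModule.lieSpan_range_ι, LieSubalgebra.lieSpan_le]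
  rintro _ ⟨⟨v, w⟩, rfl⟩
  have hvw : FreeLieModule.ι Φ (V × W) (v, w) = ιV Φ V W v + ιW Φ V W w := by
    simp [ιV, ιW, ← map_add]
  rw [SetLike.mem_coe, hvw]
  exact add_mem (LieSubalgebra.subset_lieSpan (Or.inl ⟨v, rfl⟩))
    (LieSubalgebra.subset_lieSpan (Or.inr ⟨w, rfl⟩))

theorem lie_mem_of_forall_ιV_ιW {Q : Submodule Φ (FreeLieModule Φ (V × W))}
    (hV : ∀ v, ∀ q ∈ Q, ⁅ιV Φ V W v, q⁆ ∈ Q) (hW : ∀ w, ∀ q ∈ Q, ⁅ιW Φ V W w, q⁆ ∈ Q)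
    (y : FreeLieModule Φ (V × W)) : ∀ q ∈ Q, ⁅y, q⁆ ∈ Q :=
  LieSubalgebra.lie_mem_of_lieSpan_eq_top lieSpan_range_ιV_union_range_ιW
    (by rintro _ (⟨v, rfl⟩ | ⟨w, rfl⟩); exacts [hV v, hW w]) y

theorem lieSpan_le_of_forall_ιV_ιW {t : Set (FreeLieModule Φ (V × W))}
    {Q : Submodule Φ (FreeLieModule Φ (V × W))} (ht : t ⊆ Q)
    (hV : ∀ v, ∀ q ∈ Q, ⁅ιV Φ V W v, q⁆ ∈ Q) (hW : ∀ w, ∀ q ∈ Q, ⁅ιW Φ V W w, q⁆ ∈ Q) :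
    (LieSubmodule.lieSpan Φ (FreeLieModule Φ (V × W)) t).toSubmodule ≤ Q :=
  let I : LieIdeal Φ (FreeLieModule Φ (V × W)) :=
    { Q with lie_mem := fun {y _} hq => lie_mem_of_forall_ιV_ιW hV hW y _ hq }
  (LieSubmodule.lieSpan_le (N := I)).mpr ht

theorem idealW_le_lieSpan_lazardM :
    (idealW Φ V W).toSubmodule ≤
      (LieSubalgebra.lieSpan Φ _ (lazardM Φ V W : Set (FreeLieModule Φ (V × W)))).toSubmodule :=
  lieSpan_le_of_forall_ιV_ιW
    (by rintro _ ⟨w, rfl⟩; exact LieSubalgebra.subset_lieSpan (ιW_mem_lazardM w))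
    (fun v _ hq => LieSubalgebra.lie_mem_lieSpan_of_lie_mem
      (fun _ hm => LieSubalgebra.subset_lieSpan (lie_mem_adSpan (ιV_mem_lieV v) hm)) hq)
    (fun w _ hq => LieSubalgebra.lie_mem _ (LieSubalgebra.subset_lieSpan (ιW_mem_lazardM w)) hq)

theorem lie_mem_lazardM1 {m p : FreeLieModule Φ (V × W)} (hm : m ∈ lazardM Φ V W)
    (hp : p ∈ idealA Φ V W A) : ⁅m, p⁆ ∈ lazardM1 Φ V W A B :=
  Submodule.mem_sup_left (lie_mem_bracketSpan hm hp)

theorem le_lazardM1 : B ≤ lazardM1 Φ V W A B :=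
  fun _ hb => Submodule.mem_sup_right (subset_adSpan _ _ hb)

theorem lie_mem_lazardM1_of_mem_lieV {x m : FreeLieModule Φ (V × W)} (hx : x ∈ lieV Φ V W)
    (hm : m ∈ lazardM1 Φ V W A B) : ⁅x, m⁆ ∈ lazardM1 Φ V W A B := by
  obtain ⟨p, hp, q, hq, rfl⟩ := Submodule.mem_sup.mp hm
  rw [lie_add]
  exact add_mem
    (Submodule.mem_sup_left (lie_mem_bracketSpan_of_lie_mem
      (fun _ => lie_mem_adSpan hx) (fun _ => lie_mem_adSpan hx) hp))
    (Submodule.mem_sup_right (lie_mem_adSpan hx hq))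

variable (Φ V W A B) in
/-- `⟨M₁⟩_{L(M)}`, where `L(M)` is realised as the ideal of `L(V ⊕ W)` generated by `W`. -/
noncomputable def idealM1 : LieIdeal Φ (FreeLieModule Φ (V × W)) where
  toSubmodule := adSpan Φ ↑(idealW Φ V W) ↑(lazardM1 Φ V W A B)
  lie_mem {y _} hq := lie_mem_of_forall_ιV_ιW
    (fun v _ => lie_mem_adSpan_of_lie_mem (fun _ hk => (idealW Φ V W).lie_mem hk)
      fun _ hm => subset_adSpan _ _ (lie_mem_lazardM1_of_mem_lieV (ιV_mem_lieV v) hm))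
    (fun w _ => lie_mem_adSpan (lazardM_le_idealW (ιW_mem_lazardM w))) y _ hq

theorem lie_mem_idealM1 {x p : FreeLieModule Φ (V × W)} (hx : x ∈ idealW Φ V W)
    (hp : p ∈ idealA Φ V W A) : ⁅x, p⁆ ∈ idealM1 Φ V W A B :=
  LieSubalgebra.lie_mem_of_mem_lieSpan
    (fun _ hm _ hp => subset_adSpan _ _ (lie_mem_lazardM1 hm hp))
    (idealW_le_lieSpan_lazardM hx) hp

theorem idealAB_le_idealA_sup_idealM1 :
    (idealAB Φ V W A B).toSubmodule ≤ idealA Φ V W A ⊔ (idealM1 Φ V W A B).toSubmodule := by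
  refine lieSpan_le_of_forall_ιV_ιW (Set.union_subset ?_ ?_) ?_ ?_
  · exact fun _ ha => Submodule.mem_sup_left (subset_adSpan _ _ ha)
  · exact fun _ hb => Submodule.mem_sup_right (subset_adSpan _ _ (le_lazardM1 hb))
  · intro v r hr
    obtain ⟨p, hp, q, hq, rfl⟩ := Submodule.mem_sup.mp hr
    rw [lie_add]
    exact add_mem (Submodule.mem_sup_left (lie_mem_adSpan (ιV_mem_lieV v) hp))
      (Submodule.mem_sup_right ((idealM1 Φ V W A B).lie_mem hq))
  · intro w r hr
    obtain ⟨p, hp, q, hq, rfl⟩ := Submodule.mem_sup.mp hr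
    rw [lie_add]
    have hw : ιW Φ V W w ∈ idealW Φ V W := lazardM_le_idealW (ιW_mem_lazardM w)
    exact add_mem (Submodule.mem_sup_right (lie_mem_idealM1 hw hp))
      (Submodule.mem_sup_right ((idealM1 Φ V W A B).lie_mem hq))

theorem idealA_le_idealAB : idealA Φ V W A ≤ (idealAB Φ V W A B).toSubmodule :=
  adSpan_le (fun _ ha => LieSubmodule.subset_lieSpan (Or.inl ha))
    fun _ _ _ hp => (idealAB Φ V W A B).lie_mem hp

theorem lazardM1_le_idealAB : lazardM1 Φ V W A B ≤ (idealAB Φ V W A B).toSubmodule := by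
  refine sup_le (Submodule.span_le.mpr ?_) ?_
  · rintro _ ⟨_, _, _, hq, rfl⟩
    exact (idealAB Φ V W A B).lie_mem (idealA_le_idealAB hq)
  · exact adSpan_le (fun _ hb => LieSubmodule.subset_lieSpan (Or.inr hb))
      fun _ _ _ hp => (idealAB Φ V W A B).lie_mem hp

theorem idealM1_le_idealAB : idealM1 Φ V W A B ≤ idealAB Φ V W A B :=
  adSpan_le lazardM1_le_idealAB fun _ _ _ hp => (idealAB Φ V W A B).lie_mem hp

end Lazard

theorem idealAB_eq_idealA_sup_idealM1 :
    (idealAB Φ V W A B).toSubmodule =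
      idealA Φ V W A ⊔ adSpan Φ ↑(idealW Φ V W) ↑(lazardM1 Φ V W A B) :=
  le_antisymm idealAB_le_idealA_sup_idealM1 (sup_le idealA_le_idealAB idealM1_le_idealAB)
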